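/- Let N ≥ 1 and let c : Fin N → Fin N → ℝ satisfy c k l = c l k and c k l > 0 for all k, l. Let Ω := ({(k,l) : k ≤ l} → ℝ) × ({(k,l) : k < l} → ℝ), equipped with Lebesgue (product) measure, parametrizing Hermitian N×N matrices: for ω = (x,y) ∈ Ω set Q_{kl}(ω) := x_{(k,l)} + i·y_{(k,l)} if k < l, Q_{kk}(ω) := x_{(k,k)}, and Q_{kl}(ω) := x_{(l,k)} − i·y_{(l,k)} if k > l. Define β(ω) := Σ_{k<l} c k l·(x_{(k,l)}² + y_{(k,l)}²) + (1/2)·Σ_k c k k·x_{(k,k)}² (that is, β = (1/2)Σ_{k,l} c k l·((Re Q_{kl})² + (Im Q_{kl})²)). Then ω ↦ e^{−β(ω)} and ω ↦ Q_{kl}(ω)·Q_{mn}(ω)·e^{−β(ω)} are integrable on Ω, and for all k, l, m, n ∈ Fin N: ∫_Ω Q_{kl}(ω)·Q_{mn}(ω)·e^{−β(ω)} dω = (if k = n and l = m then (c k l)⁻¹ else 0) · ∫_Ω e^{−β(ω)} dω. -/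

import Mathlib

open MeasureTheory

/-- Index set for the independent real coordinates `Re Q_{kl}`, `k ≤ l`. -/
abbrev IdxLe (N : ℕ) := {p : Fin N × Fin N // p.1 ≤ p.2}

/-- Index set for the independent real coordinates `Im Q_{kl}`, `k < l`. -/
abbrev IdxLt (N : ℕ) := {p : Fin N × Fin N // p.1 < p.2}

/-- The parameter space `Ω` of Hermitian `N×N` matrices, with Lebesgue (product)
measure on the coordinates `Re Q_{kl}` (`k ≤ l`) and `Im Q_{kl}` (`k < l`). -/
abbrev OmegaSp (N : ℕ) := (IdxLe N → ℝ) × (IdxLt N → ℝ)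

/-- The matrix entry `Q_{kl}(ω)` of the Hermitian matrix parametrized by `ω`. -/
noncomputable def Qmat {N : ℕ} (ω : OmegaSp N) (k l : Fin N) : ℂ :=
  if h : k < l then (ω.1 ⟨(k, l), le_of_lt h⟩ : ℂ) + Complex.I * (ω.2 ⟨(k, l), h⟩ : ℂ)
  else if h' : l < k then (ω.1 ⟨(l, k), le_of_lt h'⟩ : ℂ) - Complex.I * (ω.2 ⟨(l, k), h'⟩ : ℂ)
  else ((ω.1 ⟨(k, l), not_lt.mp h'⟩ : ℝ) : ℂ)

/-- `β(ω) = Σ_{k<l} c k l·((Re Q_{kl})² + (Im Q_{kl})²) + ½·Σ_k c k k·(Re Q_{kk})²`,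
i.e. `β = ½ Σ_{k,l} c k l·((Re Q_{kl})² + (Im Q_{kl})²)`. -/
noncomputable def betaFun {N : ℕ} (c : Fin N → Fin N → ℝ) (ω : OmegaSp N) : ℝ :=
  (∑ q : IdxLt N, c q.1.1 q.1.2 * ((ω.1 ⟨q.1, le_of_lt q.2⟩) ^ 2 + (ω.2 q) ^ 2)) +
    (1 / 2) * ∑ k : Fin N, c k k * (ω.1 ⟨(k, k), le_refl k⟩) ^ 2


/-!
In the real coordinates `z = ((Re Q_{kl})_{k ≤ l}, (Im Q_{kl})_{k < l})` the weight `e^{-β}` is a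
product of one-dimensional Gaussians `e^{-w_i z_i²}` and every entry `Q_{kl}` is a complex linear
form `∑ u_i z_i`. Distinct coordinates are uncorrelated and `∫ z_i² e^{-β} = (2 w_i)⁻¹ ∫ e^{-β}`
(integration by parts), so `∫ Q_{kl} Q_{mn} e^{-β} = (∑ u^{kl}_i u^{mn}_i / (2 w_i)) ∫ e^{-β}`.
For `k ≠ l` the real part of `Q_{kl}` contributes `1/(2c_{kl})` when `{m, n} = {k, l}` and the
imaginary part contributes `∓1/(2c_{kl})` when `(m, n) = (k, l)`, resp. `(l, k)`; for `k = l` the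
diagonal weight `c_{kk}/2` gives `1/c_{kk}` directly.
-/

open Real

theorem integral_mul_exp_neg_mul_sq (b : ℝ) : ∫ x : ℝ, x * exp (-b * x ^ 2) = 0 := by
  have h := integral_neg_eq_self (fun x : ℝ => x * exp (-b * x ^ 2)) volume
  simp only [neg_sq, neg_mul, integral_neg] at h ⊢
  linarith

theorem integrable_pow_mul_exp_neg_mul_sq {b : ℝ} (hb : 0 < b) (n : ℕ) :
    Integrable fun x : ℝ => x ^ n * exp (-b * x ^ 2) := by
  simpa using integrable_rpow_mul_exp_neg_mul_sq hb (s := n)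
    (neg_one_lt_zero.trans_le n.cast_nonneg)

theorem integral_sq_mul_exp_neg_mul_sq {b : ℝ} (hb : 0 < b) :
    ∫ x : ℝ, x ^ 2 * exp (-b * x ^ 2) = (2 * b)⁻¹ * ∫ x : ℝ, exp (-b * x ^ 2) := by
  -- `x e^{-bx²}` and its derivative `e^{-bx²} - 2b x² e^{-bx²}` are integrable, so the latter
  -- integrates to zero.
  have hderiv (x : ℝ) : HasDerivAt (fun t => t * exp (-b * t ^ 2))
      (exp (-b * x ^ 2) - 2 * b * (x ^ 2 * exp (-b * x ^ 2))) x := by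
    refine ((hasDerivAt_id' x).fun_mul ((hasDerivAt_pow 2 x).const_mul (-b)).exp).congr_deriv ?_
    push_cast
    ring
  have hint := (integrable_pow_mul_exp_neg_mul_sq hb 2).const_mul (2 * b)
  have h := integral_eq_zero_of_hasDerivAt_of_integrable hderiv
    ((integrable_exp_neg_mul_sq hb).sub hint) (integrable_mul_exp_neg_mul_sq hb)
  rw [integral_sub (integrable_exp_neg_mul_sq hb) hint, integral_const_mul, sub_eq_zero] at h
  rw [h, ← mul_assoc, inv_mul_cancel₀ (by positivity), one_mul]

section Gaussian

variable {ι : Type*} [Fintype ι]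

noncomputable def gaussWeight (a x : ι → ℝ) : ℝ := exp (-∑ i, a i * x i ^ 2)

theorem prod_mul_gaussWeight (a : ι → ℝ) (φ : ι → ℝ → ℝ) (x : ι → ℝ) :
    (∏ i, φ i (x i)) * gaussWeight a x = ∏ i, φ i (x i) * exp (-a i * x i ^ 2) := by
  simp only [gaussWeight, ← Finset.sum_neg_distrib, exp_sum, ← Finset.prod_mul_distrib, neg_mul]

theorem integrable_prod_mul_gaussWeight (a : ι → ℝ) {φ : ι → ℝ → ℝ}
    (hφ : ∀ i, Integrable fun t => φ i t * exp (-a i * t ^ 2)) :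
    Integrable fun x => (∏ i, φ i (x i)) * gaussWeight a x := by
  simp only [prod_mul_gaussWeight]
  exact Integrable.fintype_prod (f := fun i t => φ i t * exp (-a i * t ^ 2)) hφ

theorem integral_prod_mul_gaussWeight (a : ι → ℝ) (φ : ι → ℝ → ℝ) :
    ∫ x, (∏ i, φ i (x i)) * gaussWeight a x = ∏ i, ∫ t, φ i t * exp (-a i * t ^ 2) := by
  simp only [prod_mul_gaussWeight]
  exact integral_fintype_prod_eq_prod (fun i t => φ i t * exp (-a i * t ^ 2))

theorem integral_gaussWeight (a : ι → ℝ) :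
    ∫ x, gaussWeight a x = ∏ i, ∫ t, exp (-a i * t ^ 2) := by
  simpa using integral_prod_mul_gaussWeight a (fun _ _ => 1)

theorem sum_mul_sum_mul_gaussWeight (a : ι → ℝ) (u v : ι → ℂ) (x : ι → ℝ) :
    (∑ i, u i * x i) * (∑ j, v j * x j) * (gaussWeight a x : ℂ) =
      ∑ i, ∑ j, u i * v j * ((x i * x j * gaussWeight a x : ℝ) : ℂ) := by
  rw [Finset.sum_mul_sum, Finset.sum_mul]
  push_cast
  refine Finset.sum_congr rfl fun i _ => ?_
  rw [Finset.sum_mul]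
  exact Finset.sum_congr rfl fun j _ => by ring

variable {a : ι → ℝ}

theorem integrable_gaussWeight (ha : ∀ i, 0 < a i) : Integrable (gaussWeight a) := by
  simpa using integrable_prod_mul_gaussWeight a (φ := fun _ _ => 1)
    (by simpa using fun i => integrable_exp_neg_mul_sq (ha i))

variable [DecidableEq ι]

def pairExponent (p q i : ι) : ℕ := (if i = p then 1 else 0) + (if i = q then 1 else 0)

theorem prod_pow_pairExponent (p q : ι) (x : ι → ℝ) :
    ∏ i, x i ^ pairExponent p q i = x p * x q := by
  simp only [pairExponent, pow_add, Finset.prod_mul_distrib, pow_ite, pow_one, pow_zero,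
    Finset.prod_ite_eq', Finset.mem_univ, if_true]

theorem integrable_mul_mul_gaussWeight (ha : ∀ i, 0 < a i) (p q : ι) :
    Integrable fun x => x p * x q * gaussWeight a x := by
  simpa only [prod_pow_pairExponent] using integrable_prod_mul_gaussWeight a
    (φ := fun i t => t ^ pairExponent p q i) fun i => integrable_pow_mul_exp_neg_mul_sq (ha i) _

theorem integral_mul_mul_gaussWeight (ha : ∀ i, 0 < a i) (p q : ι) :
    ∫ x, x p * x q * gaussWeight a x =
      (if p = q then (2 * a p)⁻¹ else 0) * ∫ x, gaussWeight a x := by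
  have h := integral_prod_mul_gaussWeight a (fun i t => t ^ pairExponent p q i)
  simp only [prod_pow_pairExponent] at h
  rw [h, integral_gaussWeight]
  split_ifs with hpq
  · subst hpq
    have hfactor (i : ι) : ∫ t, t ^ pairExponent p p i * exp (-a i * t ^ 2) =
        (if i = p then (2 * a p)⁻¹ else 1) * ∫ t, exp (-a i * t ^ 2) := by
      by_cases hi : i = p
      · subst hi
        simpa [pairExponent] using integral_sq_mul_exp_neg_mul_sq (ha i)
      · simp [pairExponent, hi]
    simp only [hfactor, Finset.prod_mul_distrib, Finset.prod_ite_eq', Finset.mem_univ, if_true]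
  · rw [zero_mul]
    refine Finset.prod_eq_zero (Finset.mem_univ p) ?_
    simpa [pairExponent, hpq] using integral_mul_exp_neg_mul_sq (a p)

theorem integrable_sum_mul_sum_mul_gaussWeight (ha : ∀ i, 0 < a i) (u v : ι → ℂ) :
    Integrable fun x : ι → ℝ =>
      (∑ i, u i * x i) * (∑ j, v j * x j) * (gaussWeight a x : ℂ) := by
  simp only [sum_mul_sum_mul_gaussWeight]
  exact integrable_finsetSum _ fun i _ => integrable_finsetSum _ fun j _ =>
    ((integrable_mul_mul_gaussWeight ha i j).ofReal).const_mul _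

theorem integral_sum_mul_sum_mul_gaussWeight (ha : ∀ i, 0 < a i) (u v : ι → ℂ) :
    ∫ x : ι → ℝ, (∑ i, u i * x i) * (∑ j, v j * x j) * (gaussWeight a x : ℂ) =
      (∑ i, u i * v i / (2 * a i)) * ∫ x, (gaussWeight a x : ℂ) := by
  have hint (i j : ι) : Integrable fun x : ι → ℝ =>
      u i * v j * ((x i * x j * gaussWeight a x : ℝ) : ℂ) :=
    (integrable_mul_mul_gaussWeight ha i j).ofReal.const_mul _
  simp only [sum_mul_sum_mul_gaussWeight]
  have hrow (i : ι) : Integrable fun x : ι → ℝ =>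
      ∑ j, u i * v j * ((x i * x j * gaussWeight a x : ℝ) : ℂ) :=
    integrable_finsetSum _ fun j _ => hint i j
  have hrow_integral (i : ι) :
      ∫ x : ι → ℝ, ∑ j, u i * v j * ((x i * x j * gaussWeight a x : ℝ) : ℂ) =
        u i * v i / (2 * a i) * ∫ x, (gaussWeight a x : ℂ) := by
    rw [integral_finsetSum _ fun j _ => hint i j]
    simp only [integral_const_mul, integral_complex_ofReal, integral_mul_mul_gaussWeight ha]
    rw [Fintype.sum_eq_single i fun j hj => by simp [Ne.symm hj], if_pos rfl]
    push_cast
    ring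
  rw [integral_finsetSum _ fun i _ => hrow i, Finset.sum_mul]
  exact Finset.sum_congr rfl fun i _ => hrow_integral i

end Gaussian

section HermitianCoordinates

variable {N : ℕ}

def idxLtSumFinEquivIdxLe : IdxLt N ⊕ Fin N ≃ IdxLe N where
  toFun := Sum.elim (fun q => ⟨q.1, q.2.le⟩) fun k => ⟨(k, k), le_rfl⟩
  invFun p := if h : p.1.1 < p.1.2 then .inl ⟨p.1, h⟩ else .inr p.1.1
  left_inv := by
    rintro (⟨⟨k, l⟩, h⟩ | k) <;> simp [*]
  right_inv := by
    rintro ⟨⟨k, l⟩, h⟩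
    rcases h.lt_or_eq with h | h
    · simp [h]
    · obtain rfl : k = l := h
      simp

def idxLeOfPair (k l : Fin N) : IdxLe N :=
  if h : k ≤ l then ⟨(k, l), h⟩ else ⟨(l, k), le_of_not_ge h⟩

noncomputable def coordWeight (c : Fin N → Fin N → ℝ) : IdxLe N ⊕ IdxLt N → ℝ :=
  Sum.elim (fun p => if p.1.1 = p.1.2 then c p.1.1 p.1.2 / 2 else c p.1.1 p.1.2)
    fun q => c q.1.1 q.1.2

noncomputable def entryCoeff (k l : Fin N) : IdxLe N ⊕ IdxLt N → ℂ :=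
  Sum.elim (fun p => if p = idxLeOfPair k l then 1 else 0)
    fun q => if h : k < l then (if q = ⟨(k, l), h⟩ then Complex.I else 0)
      else if h : l < k then (if q = ⟨(l, k), h⟩ then -Complex.I else 0) else 0

theorem coordWeight_pos {c : Fin N → Fin N → ℝ} (hpos : ∀ k l, 0 < c k l)
    (i : IdxLe N ⊕ IdxLt N) : 0 < coordWeight c i := by
  rcases i with p | q <;> simp only [coordWeight, Sum.elim_inl, Sum.elim_inr]
  · split_ifs <;> linarith [hpos p.1.1 p.1.2]
  · exact hpos _ _

theorem betaFun_eq_sum_coordWeight (c : Fin N → Fin N → ℝ) (z : IdxLe N ⊕ IdxLt N → ℝ) :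
    betaFun c (z ∘ .inl, z ∘ .inr) = ∑ i, coordWeight c i * z i ^ 2 := by
  rw [Fintype.sum_sum_type, ← idxLtSumFinEquivIdxLe.sum_comp, Fintype.sum_sum_type]
  have hne (q : IdxLt N) : q.1.1 ≠ q.1.2 := q.2.ne
  simp only [betaFun, Function.comp_apply, mul_add, Finset.sum_add_distrib, div_eq_inv_mul, mul_one,
    Finset.mul_sum, coordWeight, idxLtSumFinEquivIdxLe, Equiv.coe_fn_mk, Sum.elim_inl, hne,
    ↓reduceIte, Sum.elim_inr, mul_assoc]
  ring

theorem Qmat_eq_sum_entryCoeff (z : IdxLe N ⊕ IdxLt N → ℝ) (k l : Fin N) :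
    Qmat (z ∘ .inl, z ∘ .inr) k l = ∑ i, entryCoeff k l i * z i := by
  rw [Fintype.sum_sum_type]
  rcases lt_trichotomy k l with h | rfl | h
  · simp [Qmat, entryCoeff, idxLeOfPair, h, h.le]
  · simp [Qmat, entryCoeff, idxLeOfPair]
  · simp only [Qmat, not_lt.mpr h.le, ↓reduceDIte, h, Function.comp_apply, entryCoeff, idxLeOfPair,
      not_le.mpr h, Sum.elim_inl, ite_mul, one_mul, zero_mul, Finset.sum_ite_eq', Finset.mem_univ,
      ↓reduceIte, Sum.elim_inr, neg_mul]
    ring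

theorem sum_entryCoeff_mul_entryCoeff {c : Fin N → Fin N → ℝ} (hsymm : ∀ k l, c k l = c l k)
    (k l m n : Fin N) :
    ∑ i, entryCoeff k l i * entryCoeff m n i / (2 * coordWeight c i) =
      if k = n ∧ l = m then ((c k l)⁻¹ : ℂ) else 0 := by
  -- Once the orders of `k, l` and of `m, n` are fixed, each coefficient vector has at most two
  -- nonzero entries, and what remains is a finite case check.
  rw [Fintype.sum_sum_type]
  obtain hkl | rfl | hkl := lt_trichotomy k l <;> obtain hmn | rfl | hmn := lt_trichotomy m n <;>
    simp [entryCoeff, coordWeight, idxLeOfPair, *, lt_asymm, ne_of_lt, le_of_lt, not_le_of_gt,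
      ite_div, Finset.sum_ite_eq']
  all_goals grind

end HermitianCoordinates

theorem stmt18_general (N : ℕ) (c : Fin N → Fin N → ℝ)
    (hsymm : ∀ k l, c k l = c l k) (hpos : ∀ k l, 0 < c k l) :
    (Integrable fun ω : OmegaSp N => Real.exp (-betaFun c ω)) ∧
    ∀ k l m n : Fin N,
      (Integrable fun ω : OmegaSp N =>
        Qmat ω k l * Qmat ω m n * (Real.exp (-betaFun c ω) : ℂ)) ∧
      ∫ ω : OmegaSp N, Qmat ω k l * Qmat ω m n * (Real.exp (-betaFun c ω) : ℂ) =
        (if k = n ∧ l = m then ((c k l : ℝ) : ℂ)⁻¹ else 0) *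
          ∫ ω : OmegaSp N, (Real.exp (-betaFun c ω) : ℂ) := by
  have hw := coordWeight_pos hpos
  set e := MeasurableEquiv.sumPiEquivProdPi fun _ : IdxLe N ⊕ IdxLt N => ℝ
  have he : MeasurePreserving e := (volume_measurePreserving_sumPiEquivProdPi_symm _).symm
  have hexp (z) : Real.exp (-betaFun c (e z)) = gaussWeight (coordWeight c) z := by
    rw [gaussWeight, ← betaFun_eq_sum_coordWeight]; rfl
  refine ⟨?_, fun k l m n => ⟨?_, ?_⟩⟩
  · rw [← he.integrable_comp_emb e.measurableEmbedding]
    simpa only [Function.comp_def, hexp] using integrable_gaussWeight hw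
  · rw [← he.integrable_comp_emb e.measurableEmbedding]
    have h := integrable_sum_mul_sum_mul_gaussWeight hw (entryCoeff k l) (entryCoeff m n)
    simp_rw [← Qmat_eq_sum_entryCoeff, ← hexp] at h
    exact h
  · rw [← he.integral_comp', ← he.integral_comp']
    have h := integral_sum_mul_sum_mul_gaussWeight hw (entryCoeff k l) (entryCoeff m n)
    simp_rw [← Qmat_eq_sum_entryCoeff, ← hexp, sum_entryCoeff_mul_entryCoeff hsymm] at h
    exact h

/-- Gauge-field propagator for random Hermitian matrices:  if `c` is symmetric and
positive, then `e^{−β}` and `Q_{kl}Q_{mn}e^{−β}` are integrable on `Ω`, and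
`∫ Q_{kl}Q_{mn}e^{−β} = δ_{kn}δ_{lm}·(c k l)⁻¹·∫ e^{−β}`. -/
theorem stmt18 (N : ℕ) (hN : 1 ≤ N) (c : Fin N → Fin N → ℝ)
    (hsymm : ∀ k l, c k l = c l k) (hpos : ∀ k l, 0 < c k l) :
    (Integrable fun ω : OmegaSp N => Real.exp (-betaFun c ω)) ∧
    ∀ k l m n : Fin N,
      (Integrable fun ω : OmegaSp N =>
        Qmat ω k l * Qmat ω m n * (Real.exp (-betaFun c ω) : ℂ)) ∧
      ∫ ω : OmegaSp N, Qmat ω k l * Qmat ω m n * (Real.exp (-betaFun c ω) : ℂ) =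
        (if k = n ∧ l = m then ((c k l : ℝ) : ℂ)⁻¹ else 0) *
          ∫ ω : OmegaSp N, (Real.exp (-betaFun c ω) : ℂ) :=
  stmt18_general N c hsymm hpos
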